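/- Let X ∈ ℝ^{n×d} and let λ ∈ ℝ^n with λ ≥ 0 componentwise. Then max_{u ∈ ℝ^d, ‖u‖₂ ≤ 1} |λᵀ(Xu)₊| = max_{z ∈ [0,1]^n} ‖Xᵀ diag(λ) z‖₂. -/
import Mathlib


open Matrix

/-- Euclidean norm of a vector in `ℝ^d`. -/
noncomputable def e2 {d : ℕ} (v : Fin d → ℝ) : ℝ := Real.sqrt (∑ k, (v k) ^ 2)

/-- The solid unit hypercube `[0,1]^n`. -/
def box (n : ℕ) : Set (Fin n → ℝ) := {b | ∀ i, 0 ≤ b i ∧ b i ≤ 1}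

lemma e2_nonneg {d : ℕ} (v : Fin d → ℝ) : 0 ≤ e2 v := Real.sqrt_nonneg _

lemma e2_sq {d : ℕ} (v : Fin d → ℝ) : e2 v ^ 2 = ∑ k, (v k) ^ 2 := by
  rw [e2, Real.sq_sqrt]; positivity

lemma e2_cauchy {d : ℕ} (v u : Fin d → ℝ) : ∑ k, v k * u k ≤ e2 v * e2 u :=
  Real.sum_mul_le_sqrt_mul_sqrt _ _ _

lemma e2_mono {d : ℕ} {v w : Fin d → ℝ} (h : ∀ k, |v k| ≤ |w k|) : e2 v ≤ e2 w := by
  apply Real.sqrt_le_sqrt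
  exact Finset.sum_le_sum fun k _ => by
    have := h k; nlinarith [abs_nonneg (v k), abs_nonneg (w k), sq_abs (v k), sq_abs (w k)]

/-- Reduction of the ReLU dual constraint in the all-positive-labels case:
for `λ ≥ 0`, `max_{‖u‖₂ ≤ 1} |λᵀ (X u)₊| = max_{z ∈ [0,1]^n} ‖Xᵀ diag(λ) z‖₂`. -/
theorem stmt18 (n d : ℕ) (X : Matrix (Fin n) (Fin d) ℝ)
    (l : Fin n → ℝ) (hl : ∀ i, 0 ≤ l i) :
    sSup ((fun u => |∑ i, l i * max (X.mulVec u i) 0|) '' {u : Fin d → ℝ | e2 u ≤ 1}) =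
      sSup ((fun z => e2 (fun k => ∑ i, X i k * l i * z i)) '' box n) := by
  set f : (Fin d → ℝ) → ℝ := fun u => |∑ i, l i * max (X.mulVec u i) 0| with hf
  set g : (Fin n → ℝ) → ℝ := fun z => e2 (fun k => ∑ i, X i k * l i * z i) with hg
  set A := f '' {u : Fin d → ℝ | e2 u ≤ 1} with hA
  set B := g '' box n with hB
  -- boundedness of A
  have hbA : BddAbove A := by
    refine ⟨∑ i, l i * ∑ k, |X i k|, ?_⟩
    rintro _ ⟨u, hu, rfl⟩
    have hu' : ∀ k, |u k| ≤ 1 := by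
      intro k
      have hsq : Real.sqrt (∑ k, (u k) ^ 2) ≤ 1 := hu
      have h1 : ∑ k, (u k) ^ 2 ≤ 1 := by
        nlinarith [Real.sq_sqrt (show (0:ℝ) ≤ ∑ k, (u k)^2 by positivity),
          Real.sqrt_nonneg (∑ k, (u k)^2)]
      have h2 : (u k) ^ 2 ≤ 1 := le_trans (Finset.single_le_sum (f := fun k => (u k)^2)
        (fun k _ => sq_nonneg _) (Finset.mem_univ k)) h1
      nlinarith [abs_nonneg (u k), sq_abs (u k)]
    show |∑ i, l i * max (X.mulVec u i) 0| ≤ _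
    rw [abs_of_nonneg (Finset.sum_nonneg fun i _ =>
      mul_nonneg (hl i) (le_max_right _ _))]
    refine Finset.sum_le_sum fun i _ => mul_le_mul_of_nonneg_left ?_ (hl i)
    refine max_le ?_ (by positivity)
    calc X.mulVec u i = ∑ k, X i k * u k := rfl
      _ ≤ ∑ k, |X i k| := Finset.sum_le_sum fun k _ => by
          calc X i k * u k ≤ |X i k * u k| := le_abs_self _
            _ = |X i k| * |u k| := abs_mul _ _
            _ ≤ |X i k| * 1 := mul_le_mul_of_nonneg_left (hu' k) (abs_nonneg _)
            _ = |X i k| := mul_one _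
  -- boundedness of B
  have hbB : BddAbove B := by
    refine ⟨e2 (fun k => ∑ i, |X i k| * l i), ?_⟩
    rintro _ ⟨z, hz, rfl⟩
    refine e2_mono fun k => ?_
    have h1 : |∑ i, X i k * l i * z i| ≤ ∑ i, |X i k| * l i := by
      refine le_trans (Finset.abs_sum_le_sum_abs _ _) (Finset.sum_le_sum fun i _ => ?_)
      rw [abs_mul, abs_mul, abs_of_nonneg (hl i)]
      calc |X i k| * l i * |z i| ≤ |X i k| * l i * 1 := by
            refine mul_le_mul_of_nonneg_left ?_ (mul_nonneg (abs_nonneg _) (hl i))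
            rw [abs_of_nonneg (hz i).1]; exact (hz i).2
        _ = |X i k| * l i := mul_one _
    exact le_trans h1 (le_abs_self _)
  -- key swap identity
  have hswap : ∀ (u : Fin d → ℝ) (z : Fin n → ℝ),
      ∑ k, (∑ i, X i k * l i * z i) * u k = ∑ i, l i * z i * X.mulVec u i := by
    intro u z
    calc ∑ k, (∑ i, X i k * l i * z i) * u k
        = ∑ k, ∑ i, X i k * l i * z i * u k := by
          refine Finset.sum_congr rfl fun k _ => ?_; rw [Finset.sum_mul]
      _ = ∑ i, ∑ k, X i k * l i * z i * u k := Finset.sum_comm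
      _ = ∑ i, l i * z i * X.mulVec u i := by
          refine Finset.sum_congr rfl fun i _ => ?_
          show _ = l i * z i * ∑ k, X i k * u k
          rw [Finset.mul_sum]
          exact Finset.sum_congr rfl fun k _ => by ring
  apply le_antisymm
  · -- A ≤ sSup B
    refine Real.sSup_le ?_ (Real.sSup_nonneg ?_)
    · rintro _ ⟨u, hu, rfl⟩
      set z : Fin n → ℝ := fun i => if 0 ≤ X.mulVec u i then 1 else 0 with hzdef
      have hzbox : z ∈ box n := fun i => by by_cases h : 0 ≤ X.mulVec u i <;> simp [hzdef, h]
      have hval : f u = ∑ i, l i * z i * X.mulVec u i := by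
        show |∑ i, l i * max (X.mulVec u i) 0| = _
        rw [abs_of_nonneg (Finset.sum_nonneg fun i _ =>
          mul_nonneg (hl i) (le_max_right _ _))]
        refine Finset.sum_congr rfl fun i _ => ?_
        by_cases h : 0 ≤ X.mulVec u i
        · simp [hzdef, h, max_eq_left h]
        · simp [hzdef, h, max_eq_right (le_of_not_ge h)]
      rw [hval, ← hswap u z]
      calc ∑ k, (∑ i, X i k * l i * z i) * u k
          ≤ e2 (fun k => ∑ i, X i k * l i * z i) * e2 u := e2_cauchy _ _
        _ ≤ e2 (fun k => ∑ i, X i k * l i * z i) * 1 :=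
            mul_le_mul_of_nonneg_left hu (e2_nonneg _)
        _ = g z := mul_one _
        _ ≤ sSup B := le_csSup hbB ⟨z, hzbox, rfl⟩
    · rintro _ ⟨zz, hzz, rfl⟩; exact e2_nonneg _
  · -- B ≤ sSup A
    refine Real.sSup_le ?_ (Real.sSup_nonneg ?_)
    · rintro _ ⟨z, hz, rfl⟩
      set v : Fin d → ℝ := fun k => ∑ i, X i k * l i * z i with hv
      have hgz : g z = e2 v := rfl
      rcases eq_or_lt_of_le (e2_nonneg v) with h0 | hpos
      · rw [hgz, ← h0]
        refine le_csSup hbA ⟨0, by simp [Set.mem_setOf_eq, e2], ?_⟩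
        simp [hf]
      · set c := e2 v with hc
        set u : Fin d → ℝ := fun k => v k / c with hudef
        have hu1 : e2 u ≤ 1 := by
          show Real.sqrt (∑ k, (v k / c) ^ 2) ≤ 1
          have h1 : ∑ k, (v k / c) ^ 2 = (∑ k, (v k) ^ 2) / c ^ 2 := by
            rw [Finset.sum_div]; exact Finset.sum_congr rfl fun k _ => div_pow _ _ _
          rw [h1, ← e2_sq v, ← hc, div_self (pow_ne_zero 2 hpos.ne')]
          simp
        have hkey : ∑ k, v k * u k = c := by
          have h1 : ∑ k, v k * (v k / c) = (∑ k, (v k) ^ 2) / c := by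
            rw [Finset.sum_div]; exact Finset.sum_congr rfl fun k _ => by ring
          show ∑ k, v k * (v k / c) = c
          rw [h1, ← e2_sq v, ← hc, sq, mul_div_assoc, div_self hpos.ne', mul_one]
        have hle : c ≤ f u := by
          rw [← hkey]
          have h2 : ∑ k, v k * u k = ∑ i, l i * z i * X.mulVec u i := by
            rw [← hswap u z]
          rw [h2]
          show _ ≤ |∑ i, l i * max (X.mulVec u i) 0|
          refine le_trans (Finset.sum_le_sum fun i _ => ?_) (le_abs_self _)
          have hzi := hz i
          rcases le_or_gt 0 (X.mulVec u i) with h | h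
          · rw [max_eq_left h, mul_assoc]
            refine mul_le_mul_of_nonneg_left ?_ (hl i)
            nlinarith [hzi.1, hzi.2]
          · rw [max_eq_right h.le, mul_assoc]
            have h3 : z i * X.mulVec u i ≤ 0 := mul_nonpos_of_nonneg_of_nonpos hzi.1 h.le
            nlinarith [hl i]
        rw [hgz]
        exact le_trans hle (le_csSup hbA ⟨u, hu1, rfl⟩)
    · rintro _ ⟨uu, huu, rfl⟩; exact abs_nonneg _
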